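/- The union over τ* ∈ [π/2, π) of the sets ⋄^{τ*} equals ⋄₊, and for all 0 < τ₀ < τ₁ < π one has the strict inclusions ⋄^{τ₀} ⊊ ⋄^{τ₁} ⊊ ⋄₊. -/

import Mathlib

/-- The unit three-sphere in `ℝ⁴` (as the set of `ξ : Fin 4 → ℝ` of unit length,
indexed so that `ξ 3 = ξ⁴`). -/
def sphere3 : Set (Fin 4 → ℝ) := {ξ | (ξ 0) ^ 2 + (ξ 1) ^ 2 + (ξ 2) ^ 2 + (ξ 3) ^ 2 = 1}

/-- `h(τ,ξ) = cos τ - ξ⁴`. -/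
noncomputable def hfun (p : ℝ × (Fin 4 → ℝ)) : ℝ := Real.cos p.1 - p.2 3

/-- `ℏ(τ,ξ) = cos τ + ξ⁴`. -/
noncomputable def hbarfun (p : ℝ × (Fin 4 → ℝ)) : ℝ := Real.cos p.1 + p.2 3

/-- `𝔰(τ,ξ) = (2 sin τ + √(1 - (ξ⁴)²)) / ℏ(τ,ξ)`. -/
noncomputable def sfun (p : ℝ × (Fin 4 → ℝ)) : ℝ :=
  (2 * Real.sin p.1 + Real.sqrt (1 - (p.2 3) ^ 2)) / hbarfun p

/-- The future half of the Minkowski diamond,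
`⋄₊ = {(τ,ξ) ∈ [0,π) × S³ : h(τ,ξ) > 0}`. -/
def diamondPlus : Set (ℝ × (Fin 4 → ℝ)) :=
  {p | p.2 ∈ sphere3 ∧ 0 ≤ p.1 ∧ p.1 < Real.pi ∧ 0 < hfun p}

/-- `Δ_{<r} = {(τ,ξ) ∈ ⋄₊ : ℏ(τ,ξ) > 0 and 𝔰(τ,ξ) < r}`. -/
noncomputable def deltaLT (r : ℝ) : Set (ℝ × (Fin 4 → ℝ)) :=
  {p ∈ diamondPlus | 0 < hbarfun p ∧ sfun p < r}

/-- `⋄ₛ = ⋄₊ \ Δ_{<s/6}`. -/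
noncomputable def diamondS (s : ℝ) : Set (ℝ × (Fin 4 → ℝ)) := diamondPlus \ deltaLT (s / 6)

/-- `⋄_{τ,s} = ({τ} × S³) ∩ ⋄ₛ`. -/
noncomputable def diamondTauS (τ s : ℝ) : Set (ℝ × (Fin 4 → ℝ)) :=
  ({τ} ×ˢ (Set.univ : Set (Fin 4 → ℝ))) ∩ diamondS s

/-- `φ(τ,ξ) = √((1 - cos τ)/(1 - ξ⁴))`. -/
noncomputable def phifun (p : ℝ × (Fin 4 → ℝ)) : ℝ :=
  Real.sqrt ((1 - Real.cos p.1) / (1 - p.2 3))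

/-- `⋄^{τ*} = {(τ,ξ) ∈ ⋄₊ : 0 ≤ τ ≤ τ* and φ(τ,ξ) ≤ √((1 - cos((τ*+π)/2))/2)}`. -/
noncomputable def diamondUpTo (τstar : ℝ) : Set (ℝ × (Fin 4 → ℝ)) :=
  {p ∈ diamondPlus | 0 ≤ p.1 ∧ p.1 ≤ τstar ∧
    phifun p ≤ Real.sqrt ((1 - Real.cos ((τstar + Real.pi) / 2)) / 2)}

/-!
On `⋄₊` we have `ξ⁴ < cos τ ≤ 1`, hence `φ < 1`, while the cap
`√((1 - cos((τ* + π)/2))/2)` increases continuously to `1` as `τ* → π`; so every point of `⋄₊`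
lies in `⋄^{τ*}` for all `τ*` close enough to `π`. Strictness is witnessed by points
`(τ, -e₄)` on the south-pole worldline, which lie in `⋄^{τ}` but in no `⋄^{τ'}` with `τ' < τ`.
-/

open Real Set Filter Topology

noncomputable def phiBound (τ : ℝ) : ℝ := √((1 - cos ((τ + π) / 2)) / 2)

lemma monotoneOn_phiBound : MonotoneOn phiBound (Icc (-π) π) := by
  rintro τ₀ ⟨h₀, -⟩ τ₁ ⟨-, h₁⟩ h
  refine sqrt_le_sqrt (div_le_div_of_nonneg_right (sub_le_sub_left ?_ _) zero_le_two)
  exact cos_le_cos_of_nonneg_of_le_pi (by linarith) (by linarith) (by linarith)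

lemma continuous_phiBound : Continuous phiBound := by
  unfold phiBound; fun_prop

lemma phiBound_pi : phiBound π = 1 := by
  norm_num [phiBound]

lemma phifun_lt_one {p : ℝ × (Fin 4 → ℝ)} (hp : 0 < hfun p) : phifun p < 1 := by
  have hξ : p.2 3 < cos p.1 := sub_pos.mp hp
  have hden : 0 < 1 - p.2 3 := by linarith [cos_le_one p.1]
  rw [phifun, sqrt_lt' one_pos, one_pow, div_lt_one hden]
  linarith

lemma monotoneOn_diamondUpTo : MonotoneOn diamondUpTo (Icc (-π) π) :=
  fun _ h₀ _ h₁ h _ ⟨hp, hp₀, hpτ, hφ⟩ =>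
    ⟨hp, hp₀, hpτ.trans h, hφ.trans (monotoneOn_phiBound h₀ h₁ h)⟩

lemma diamondUpTo_subset_diamondPlus (τ : ℝ) : diamondUpTo τ ⊆ diamondPlus :=
  sep_subset _ _

lemma eventually_mem_diamondUpTo {p : ℝ × (Fin 4 → ℝ)} (hp : p ∈ diamondPlus) :
    ∀ᶠ τ in 𝓝[<] π, p ∈ diamondUpTo τ := by
  obtain ⟨hp₀, hpπ, hh⟩ := hp.2
  have hφ : ∀ᶠ τ in 𝓝[<] π, phifun p < phiBound τ :=
    ((continuous_phiBound.tendsto π).mono_left nhdsWithin_le_nhds).eventually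
      (lt_mem_nhds (phiBound_pi ▸ phifun_lt_one hh))
  filter_upwards [hφ, Ioo_mem_nhdsLT hpπ] with τ hφτ hτ
  exact ⟨hp, hp₀, hτ.1.le, hφτ.le⟩

lemma iUnion_diamondUpTo :
    ⋃ τ ∈ Ico (π / 2) π, diamondUpTo τ = diamondPlus := by
  refine (iUnion₂_subset fun τ _ => diamondUpTo_subset_diamondPlus τ).antisymm fun p hp => ?_
  obtain ⟨τ, hp, hτ⟩ :=
    (eventually_mem_diamondUpTo hp |>.and (Ioo_mem_nhdsLT (half_lt_self pi_pos))).exists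
  exact mem_biUnion (Ioo_subset_Ico_self hτ) hp

def southPole (t : ℝ) : ℝ × (Fin 4 → ℝ) := (t, ![0, 0, 0, -1])

lemma southPole_fst (t : ℝ) : (southPole t).1 = t := rfl

lemma southPole_snd_three (t : ℝ) : (southPole t).2 3 = -1 := rfl

lemma southPole_mem_diamondPlus {t : ℝ} (h₀ : 0 ≤ t) (h₁ : t < π) :
    southPole t ∈ diamondPlus := by
  refine ⟨by simp [southPole, sphere3], h₀, h₁, ?_⟩
  have : cos π < cos t := cos_lt_cos_of_nonneg_of_le_pi h₀ le_rfl h₁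
  rw [cos_pi] at this
  rw [hfun, southPole_fst, southPole_snd_three]
  linarith

lemma southPole_mem_diamondUpTo {t : ℝ} (h₀ : 0 ≤ t) (h₁ : t < π) :
    southPole t ∈ diamondUpTo t := by
  refine ⟨southPole_mem_diamondPlus h₀ h₁, h₀, le_rfl, ?_⟩
  have hφ : phifun (southPole t) = phiBound (2 * t - π) := by
    rw [phifun, phiBound, southPole_fst, southPole_snd_three]
    ring_nf
  rw [hφ]
  exact monotoneOn_phiBound ⟨by linarith, by linarith⟩ ⟨by linarith, h₁.le⟩ (by linarith)

lemma southPole_not_mem_diamondUpTo {t τ : ℝ} (h : τ < t) : southPole t ∉ diamondUpTo τ :=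
  fun hp => h.not_ge hp.2.2.1

/-- Lemma 5.3 (lem:Dexhaustion) of the paper: the sets `⋄^{τ*}` for
`τ* ∈ [π/2,π)` exhaust `⋄₊`, and for `0 < τ₀ < τ₁ < π` one has the strict inclusions
`⋄^{τ₀} ⊊ ⋄^{τ₁} ⊊ ⋄₊`. -/
theorem stmt8 :
    (⋃ τstar ∈ Set.Ico (Real.pi / 2) Real.pi, diamondUpTo τstar) = diamondPlus ∧
    (∀ τ₀ τ₁ : ℝ, 0 < τ₀ → τ₀ < τ₁ → τ₁ < Real.pi →
      diamondUpTo τ₀ ⊂ diamondUpTo τ₁ ∧ diamondUpTo τ₁ ⊂ diamondPlus) := by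
  refine ⟨iUnion_diamondUpTo, fun τ₀ τ₁ h₀ h₀₁ h₁ => ⟨?_, ?_⟩⟩
  · have hsub := monotoneOn_diamondUpTo ⟨by linarith [pi_pos], by linarith⟩
      ⟨by linarith [pi_pos], h₁.le⟩ h₀₁.le
    exact (ssubset_iff_of_subset hsub).2
      ⟨_, southPole_mem_diamondUpTo (by linarith) h₁, southPole_not_mem_diamondUpTo h₀₁⟩
  · exact (ssubset_iff_of_subset (diamondUpTo_subset_diamondPlus τ₁)).2
      ⟨southPole ((τ₁ + π) / 2), southPole_mem_diamondPlus (by linarith) (by linarith),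
        southPole_not_mem_diamondUpTo (by linarith)⟩
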